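/- arXiv:2504.13013 — 2 statements merged into one kernel-verified Lean document; each statement's English description precedes it below -/
import Mathlib

section
/- Let K = conv{a, b, c} be a triangle in ℝ² with x = ‖b − c‖ ≤ y = ‖a − c‖, and let U be the perpendicular bisector of the segment [a, b] with z = ‖a − b‖. Then R(K, Φ_U(K)) = 1 + (y² − x²)/z², where Φ_U is the reflection across U and R the circumradius. -/
open Pointwise EuclideanGeometry

/-- The circumradius of `K` with respect to `C`: the smallest `t > 0` such that a
translate of `t • C` contains `K`. -/
noncomputable def circumradius (K C : Set (EuclideanSpace ℝ (Fin 2))) : ℝ :=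
  sInf {t : ℝ | 0 < t ∧ ∃ z : EuclideanSpace ℝ (Fin 2), K ⊆ {z} + t • C}

instance {V P : Type*} [NormedAddCommGroup V] [InnerProductSpace ℝ V]
    [MetricSpace P] [NormedAddTorsor V P] (p₁ p₂ : P) :
    Nonempty (AffineSubspace.perpBisector p₁ p₂) :=
  ⟨⟨_, AffineSubspace.midpoint_mem_perpBisector p₁ p₂⟩⟩

/-
Reflection in the perpendicular bisector of `[a, b]` swaps `a` and `b` and moves `c` to
`c' = c - s • (b - a)` with `s = (y² - x²) / z² ≥ 0`. The homothety with centre `a` and ratio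
`1 + s` maps `conv {a, b, c'}` onto a triangle containing `K`, so `R ≤ 1 + s`. Conversely, if
`K ⊆ u + t • conv {a, b, c'}`, the support inequalities in the three outer edge normals of
`conv {a, b, c'}`, which sum to zero, add up to `1 + s ≤ t`.
-/

theorem LinearIndependent.exists_dual_apply_eq_ite {K V ι : Type*} [Field K] [AddCommGroup V]
    [Module K V] [DecidableEq ι] {v : ι → V} (hv : LinearIndependent K v) (i : ι) :
    ∃ f : Module.Dual K V, ∀ j, f (v j) = if j = i then 1 else 0 := by
  obtain ⟨f, hf⟩ := LinearMap.exists_extend ((Module.Basis.span hv).coord i)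
  refine ⟨f, fun j => ?_⟩
  have := LinearMap.congr_fun hf (Module.Basis.span hv j)
  rwa [LinearMap.comp_apply, Submodule.subtype_apply, Module.Basis.coe_span_apply,
    Module.Basis.coord_apply, Module.Basis.repr_self, Finsupp.single_apply] at this

theorem AffineIndependent.linearIndependent_vsub_fin_three {k V P : Type*} [Ring k]
    [AddCommGroup V] [Module k V] [AddTorsor V P] {p₀ p₁ p₂ : P}
    (h : AffineIndependent k ![p₀, p₁, p₂]) : LinearIndependent k ![p₁ -ᵥ p₀, p₂ -ᵥ p₀] := by
  rw [affineIndependent_iff_linearIndependent_vsub k _ (0 : Fin 3),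
    ← linearIndependent_equiv (finSuccAboveEquiv (0 : Fin 3))] at h
  convert h using 1
  ext i
  fin_cases i <;> rfl

section TriangleContainment

variable {E : Type*} [AddCommGroup E] [Module ℝ E]

theorem convexHull_triangle_subset_homothety (a b c : E) {s : ℝ} (hs : 0 ≤ s) :
    convexHull ℝ {a, b, c} ⊆ {(-s) • a} + (1 + s) • convexHull ℝ {a, b, c - s • (b - a)} := by
  set C := convexHull ℝ ({a, b, c - s • (b - a)} : Set E)
  have hmem : ∀ q ∈ C, (-s) • a + (1 + s) • q ∈ {(-s) • a} + (1 + s) • C :=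
    fun q hq => Set.add_mem_add rfl (Set.smul_mem_smul_set hq)
  have ha : a ∈ C := subset_convexHull ℝ _ (by simp)
  have hb : b ∈ C := subset_convexHull ℝ _ (by simp)
  have hc : c - s • (b - a) ∈ C := subset_convexHull ℝ _ (by simp)
  have hw : (0 : ℝ) ≤ (1 + s)⁻¹ := by positivity
  have hw' : (0 : ℝ) ≤ s / (1 + s) := by positivity
  have hsum : s / (1 + s) + (1 + s)⁻¹ = 1 := by field_simp; ring
  have hconv : Convex ℝ ({(-s) • a} + (1 + s) • C) := by
    rw [Set.singleton_add]; exact ((convex_convexHull ℝ _).smul _).translate _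
  refine convexHull_min ?_ hconv
  simp only [Set.insert_subset_iff, Set.singleton_subset_iff]
  refine ⟨?_, ?_, ?_⟩
  · convert hmem a ha using 1; module
  · convert hmem _ ((convex_convexHull ℝ _) ha hb hw' hw hsum) using 1
    match_scalars <;> field_simp
    ring
  · convert hmem _ ((convex_convexHull ℝ _) hb hc hw' hw hsum) using 1
    match_scalars <;> field_simp <;> ring

theorem le_add_mul_of_subset_singleton_add_smul_convexHull {K S : Set E} {u : E} {t : ℝ}
    (ht : 0 ≤ t) (h : K ⊆ {u} + t • convexHull ℝ S) (ℓ : Module.Dual ℝ E) {H : ℝ}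
    (hH : ∀ q ∈ S, ℓ q ≤ H) {p : E} (hp : p ∈ K) : ℓ p ≤ ℓ u + t * H := by
  obtain ⟨_, rfl, _, ⟨q, hq, rfl⟩, rfl⟩ := h hp
  rw [map_add, map_smul, smul_eq_mul]
  gcongr
  exact convexHull_min hH (convex_halfSpace_le ℓ.isLinear H) hq

theorem one_add_le_of_convexHull_subset {a b c u : E} (hind : AffineIndependent ℝ ![a, b, c])
    {s t : ℝ} (ht : 0 < t)
    (h : convexHull ℝ {a, b, c} ⊆ {u} + t • convexHull ℝ {a, b, c - s • (b - a)}) :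
    1 + s ≤ t := by
  have hli := hind.linearIndependent_vsub_fin_three
  obtain ⟨ε, hε⟩ := hli.exists_dual_apply_eq_ite 0
  obtain ⟨φ, hφ⟩ := hli.exists_dual_apply_eq_ite 1
  obtain ⟨e, rfl⟩ : ∃ e, b = a + e := ⟨b - a, by abel⟩
  obtain ⟨f, rfl⟩ : ∃ f, c = a + f := ⟨c - a, by abel⟩
  simp only [Fin.forall_fin_two, vsub_eq_sub, add_sub_cancel_left, Matrix.cons_val_zero,
    Matrix.cons_val_one, ↓reduceIte, Fin.isValue, one_ne_zero, zero_ne_one] at hε hφ h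
  obtain ⟨hεe, hεf⟩ := hε
  obtain ⟨hφe, hφf⟩ := hφ
  have support (ℓ : Module.Dual ℝ E) (H : ℝ)
      (hH : ∀ q ∈ ({a, a + e, a + f - s • e} : Set E), ℓ q ≤ H)
      (p : E) (hp : p ∈ ({a, a + e, a + f} : Set E)) : ℓ p ≤ ℓ u + t * H :=
    le_add_mul_of_subset_singleton_add_smul_convexHull ht.le h ℓ hH (subset_convexHull ℝ _ hp)
  -- Edge normals of the second triangle, summing to zero: their maxima over it exceed their
  -- values at `a` by `0, 1, 0`, and at the points `a, c, a` the excess is `0, 1 + s, 0`.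
  have h₁ := support (-φ) (-φ a) ?_ a (by simp)
  have h₂ := support (ε + (1 + s) • φ) (ε a + (1 + s) * φ a + 1) ?_ (a + f) (by simp)
  have h₃ := support (-ε - s • φ) (-ε a - s * φ a) ?_ a (by simp)
  · simp only [LinearMap.add_apply, LinearMap.sub_apply, LinearMap.neg_apply, LinearMap.smul_apply,
      map_add, smul_eq_mul, hεf, hφf] at h₁ h₂ h₃
    linarith
  all_goals
    simp only [Set.mem_insert_iff, Set.mem_singleton_iff, forall_eq_or_imp, forall_eq,
      LinearMap.add_apply, LinearMap.sub_apply, LinearMap.neg_apply, LinearMap.smul_apply,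
      map_add, map_sub, map_smul, smul_eq_mul, hεe, hεf, hφe, hφf]
    refine ⟨?_, ?_, ?_⟩ <;> linarith

end TriangleContainment

theorem circumradius_convexHull_triangle {a b c : EuclideanSpace ℝ (Fin 2)}
    (hind : AffineIndependent ℝ ![a, b, c]) {s : ℝ} (hs : 0 ≤ s) :
    circumradius (convexHull ℝ {a, b, c}) (convexHull ℝ {a, b, c - s • (b - a)}) = 1 + s := by
  refine IsLeast.csInf_eq ⟨⟨by positivity, _, convexHull_triangle_subset_homothety a b c hs⟩, ?_⟩
  rintro t ⟨ht, u, h⟩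
  exact one_add_le_of_convexHull_subset hind ht h

section Reflection

variable {V P : Type*} [NormedAddCommGroup V] [InnerProductSpace ℝ V]
    [MetricSpace P] [NormedAddTorsor V P]

theorem reflection_perpBisector_apply [FiniteDimensional ℝ V] (a b p : P) :
    reflection (AffineSubspace.perpBisector a b) p =
      ((dist p b ^ 2 - dist p a ^ 2) / dist a b ^ 2) • (b -ᵥ a) +ᵥ p := by
  rw [reflection_apply_of_mem _ p (AffineSubspace.midpoint_mem_perpBisector a b)]
  simp only [AffineSubspace.direction_perpBisector, Submodule.reflection_orthogonal_apply,
    Submodule.reflection_singleton_apply, RCLike.ofReal_real_eq_id, id]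
  set m := midpoint ℝ a b
  have hpa : p -ᵥ a = (p -ᵥ m) + (2⁻¹ : ℝ) • (b -ᵥ a) := by
    rw [← vsub_add_vsub_cancel p m a, midpoint_vsub_left, invOf_eq_inv]
  have hpb : p -ᵥ b = (p -ᵥ m) - (2⁻¹ : ℝ) • (b -ᵥ a) := by
    rw [← vsub_add_vsub_cancel p m b, midpoint_vsub_right, invOf_eq_inv, ← neg_vsub_eq_vsub_rev b a,
      smul_neg, sub_eq_add_neg]
  rw [dist_eq_norm_vsub V p b, dist_eq_norm_vsub V p a, dist_eq_norm_vsub' V a b, hpa, hpb,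
    norm_add_sq_real, norm_sub_sq_real, ← vsub_vadd p m, vadd_vadd, vsub_vadd p m]
  congr 1
  simp only [inner_smul_right, real_inner_comm (b -ᵥ a), norm_smul]
  module

theorem reflection_perpBisector_left [FiniteDimensional ℝ V] (a b : P) :
    reflection (AffineSubspace.perpBisector a b) a = b := by
  rw [reflection_perpBisector_apply, dist_self, dist_comm]
  rcases eq_or_ne b a with rfl | hba
  · simp
  · rw [zero_pow two_ne_zero, sub_zero, div_self (pow_ne_zero 2 (dist_ne_zero.2 hba)), one_smul,
      vsub_vadd]

theorem reflection_perpBisector_right [FiniteDimensional ℝ V] (a b : P) :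
    reflection (AffineSubspace.perpBisector a b) b = a := by
  rw [eq_reflection_of_eq_subspace (AffineSubspace.perpBisector_comm a b),
    reflection_perpBisector_left]

end Reflection

theorem stmt_13 (a b c : EuclideanSpace ℝ (Fin 2))
    (hind : AffineIndependent ℝ ![a, b, c])
    (x y z : ℝ) (hx : x = dist b c) (hy : y = dist a c) (hz : z = dist a b)
    (hxy : x ≤ y) :
    circumradius (convexHull ℝ {a, b, c})
        ((EuclideanGeometry.reflection (AffineSubspace.perpBisector a b)) ''
          (convexHull ℝ {a, b, c})) =
      1 + (y ^ 2 - x ^ 2) / z ^ 2 := by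
  subst hx hy hz
  set s := (dist a c ^ 2 - dist b c ^ 2) / dist a b ^ 2
  have hs : 0 ≤ s := div_nonneg (sub_nonneg.2 (pow_le_pow_left₀ dist_nonneg hxy 2)) (sq_nonneg _)
  have hc : reflection (AffineSubspace.perpBisector a b) c = c - s • (b - a) := by
    rw [reflection_perpBisector_apply, dist_comm c a, dist_comm c b, vsub_eq_sub, vadd_eq_add,
      ← neg_sub (dist a c ^ 2), neg_div, neg_smul, neg_add_eq_sub]
  have himage : reflection (AffineSubspace.perpBisector a b) '' convexHull ℝ {a, b, c} =
      convexHull ℝ {a, b, c - s • (b - a)} := by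
    rw [← AffineIsometryEquiv.coe_toAffineEquiv, ← AffineEquiv.coe_toAffineMap,
      AffineMap.image_convexHull]
    simp only [Set.image_insert_eq, Set.image_singleton, AffineEquiv.coe_toAffineMap,
      AffineIsometryEquiv.coe_toAffineEquiv, reflection_perpBisector_left,
      reflection_perpBisector_right, hc, Set.insert_comm b a]
  rw [himage]
  exact circumradius_convexHull_triangle hind hs
end

section
/- Let K = conv{a, b, c} be a triangle in ℝ² with x = ‖b − c‖ ≤ y = ‖a − c‖, and let U be the bisector of the interior angle at c. Then R(K, Φ_U(K)) = y/x, where Φ_U denotes the reflection across the line U and R the circumradius. -/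
open Pointwise EuclideanGeometry

/-!
Write `Φ` for the reflection in `U` and `r = y / x`. The bisector hypothesis says
`Φ a - c = r • (b - c)`, and applying `Φ` to it gives `Φ b - c = r⁻¹ • (a - c)`.
The homothety with centre `c` and ratio `r` sends `Φ b` to `a` and the point of the segment
`[c, Φ a]` at parameter `r⁻²` to `b`, so it maps `Φ K` onto a superset of `K`.
Conversely, a linear functional with `f (b - c) = 0` and `f (a - c) = 1` takes values in an
interval of length `r⁻¹` on `Φ K` and of length `1` on `K`, so `K ⊆ z + s • Φ K`
forces `r ≤ s`.
-/

theorem circumradius_eq_of_subset_singleton_add_smul {K C : Set (EuclideanSpace ℝ (Fin 2))}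
    {r : ℝ} {z : EuclideanSpace ℝ (Fin 2)} (hr : 0 < r) (hz : K ⊆ {z} + r • C)
    (hmin : ∀ s > 0, ∀ w, K ⊆ {w} + s • C → r ≤ s) :
    circumradius K C = r :=
  le_antisymm (csInf_le ⟨0, fun _ hs => hs.1.le⟩ ⟨hr, z, hz⟩)
    (le_csInf ⟨r, hr, z, hz⟩ fun s ⟨hs, w, hw⟩ => hmin s hs w hw)

theorem Module.exists_dual_eq_one_eq_zero_of_notMem_span {k V : Type*} [Field k]
    [AddCommGroup V] [Module k V] {u v : V} (h : v ∉ k ∙ u) :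
    ∃ f : Module.Dual k V, f v = 1 ∧ f u = 0 := by
  obtain ⟨f, hfv, hfu⟩ := Submodule.exists_dual_map_eq_bot_of_notMem h inferInstance
  refine ⟨(f v)⁻¹ • f, by simp [hfv], ?_⟩
  have : f u ∈ (k ∙ u).map f := Submodule.mem_map_of_mem (Submodule.mem_span_singleton_self u)
  simp_all

theorem AffineIndependent.vsub_notMem_span_vsub {k V P : Type*} [Field k] [AddCommGroup V]
    [Module k V] [AddTorsor V P] {a b c : P} (h : AffineIndependent k ![a, b, c]) :
    a -ᵥ c ∉ k ∙ (b -ᵥ c) := by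
  intro hac
  apply affineIndependent_iff_not_collinear_set.mp h
  rw [collinear_insert_iff_of_mem_affineSpan]
  · exact collinear_pair k b c
  · rwa [← AffineSubspace.vsub_right_mem_direction_iff_mem (right_mem_affineSpan_pair k b c),
      direction_affineSpan, vectorSpan_pair]

section Slab

variable {E : Type*} [AddCommGroup E] [Module ℝ E]

theorem sub_le_mul_of_subset_singleton_add_smul (f : E →ₗ[ℝ] ℝ) {K C : Set E} {z : E}
    {s m M : ℝ} (hs : 0 ≤ s) (hK : K ⊆ {z} + s • C) (hC : C ⊆ f ⁻¹' Set.Icc m M)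
    {p q : E} (hp : p ∈ K) (hq : q ∈ K) :
    f p - f q ≤ s * (M - m) := by
  obtain ⟨_, rfl, _, ⟨p', hp', rfl⟩, rfl⟩ := hK hp
  obtain ⟨_, rfl, _, ⟨q', hq', rfl⟩, rfl⟩ := hK hq
  have hfp := hC hp'
  have hfq := hC hq'
  simp only [Set.mem_preimage, Set.mem_Icc] at hfp hfq
  simp only [map_add, map_smul, smul_eq_mul]
  nlinarith

variable {a b c a' b' : E} {r : ℝ}

theorem triangle_subset_singleton_add_smul (hr : 1 ≤ r)
    (ha' : a' - c = r • (b - c)) (hb' : b' - c = r⁻¹ • (a - c)) :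
    convexHull ℝ {a, b, c} ⊆ {c - r • c} + r • convexHull ℝ {a', b', c} := by
  have hr0 : r ≠ 0 := by positivity
  have hmem : ∀ p ∈ convexHull ℝ {a', b', c},
      c - r • c + r • p ∈ {c - r • c} + r • convexHull ℝ {a', b', c} :=
    fun _ hp => Set.add_mem_add rfl (Set.smul_mem_smul_set hp)
  refine convexHull_min ?_ ((convex_singleton _).add ((convex_convexHull ℝ _).smul r))
  rw [Set.insert_subset_iff, Set.insert_subset_iff, Set.singleton_subset_iff]
  refine ⟨?_, ?_, ?_⟩
  · convert hmem b' (subset_convexHull ℝ _ (by simp)) using 1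
    rw [eq_add_of_sub_eq' hb']
    match_scalars <;> field_simp
    ring
  · have hseg : c + (r⁻¹ ^ 2) • (a' - c) ∈ convexHull ℝ {a', b', c} :=
      (convex_convexHull ℝ _).add_smul_sub_mem (subset_convexHull ℝ _ (by simp))
        (subset_convexHull ℝ _ (by simp))
        ⟨by positivity, pow_le_one₀ (by positivity) (inv_le_one_of_one_le₀ hr)⟩
    convert hmem _ hseg using 1
    rw [ha']
    match_scalars <;> field_simp
    ring
  · convert hmem c (subset_convexHull ℝ _ (by simp)) using 1
    abel

theorem le_of_triangle_subset_singleton_add_smul {s : ℝ} {z : E} (hr : 0 < r) (hs : 0 ≤ s)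
    (hac : a - c ∉ ℝ ∙ (b - c)) (ha' : a' - c = r • (b - c))
    (hb' : b' - c = r⁻¹ • (a - c))
    (hsub : convexHull ℝ {a, b, c} ⊆ {z} + s • convexHull ℝ {a', b', c}) : r ≤ s := by
  obtain ⟨f, hfa, hfb⟩ := Module.exists_dual_eq_one_eq_zero_of_notMem_span hac
  have hslab : convexHull ℝ {a', b', c} ⊆ f ⁻¹' Set.Icc (f c) (f c + r⁻¹) := by
    refine convexHull_min ?_ ((convex_Icc _ _).linear_preimage f)
    rw [Set.insert_subset_iff, Set.insert_subset_iff, Set.singleton_subset_iff]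
    rw [map_sub] at hfa hfb
    refine ⟨?_, ?_, ?_⟩ <;> simp only [Set.mem_preimage, Set.mem_Icc]
    · rw [eq_add_of_sub_eq' ha']
      simp [hfb, hr.le]
    · rw [eq_add_of_sub_eq' hb']
      simp [hfa, hr.le]
    · simp [hr.le]
  have hwidth := sub_le_mul_of_subset_singleton_add_smul f hs hsub hslab (p := a) (q := c)
    (subset_convexHull ℝ _ (by simp)) (subset_convexHull ℝ _ (by simp))
  rw [← map_sub, hfa, add_sub_cancel_left, ← div_eq_mul_inv, one_le_div hr] at hwidth
  exact hwidth

end Slab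

namespace EuclideanGeometry

variable {V P : Type*} [NormedAddCommGroup V] [InnerProductSpace ℝ V] [MetricSpace P]
  [NormedAddTorsor V P] (s : AffineSubspace ℝ P) [Nonempty s]
  [s.direction.HasOrthogonalProjection]
  {a b c : P} {t : ℝ}

theorem reflection_vsub_eq_inv_smul_of_reflection_vsub_eq_smul (hc : c ∈ s) (ht : t ≠ 0)
    (h : reflection s a -ᵥ c = t • (b -ᵥ c)) :
    reflection s b -ᵥ c = t⁻¹ • (a -ᵥ c) := by
  have key : a -ᵥ c = t • (reflection s b -ᵥ c) := by
    have := (reflection s).map_vsub (reflection s a) c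
    rw [reflection_reflection, (reflection_eq_self_iff c).2 hc, h, map_smul,
      (reflection s).map_vsub, (reflection_eq_self_iff c).2 hc] at this
    exact this.symm
  rw [key, smul_smul, inv_mul_cancel₀ ht, one_smul]

theorem dist_eq_mul_dist_of_reflection_vsub_eq_smul (hc : c ∈ s) (ht : 0 ≤ t)
    (h : reflection s a -ᵥ c = t • (b -ᵥ c)) :
    dist a c = t * dist b c := by
  rw [dist_comm a, ← dist_reflection_eq_of_mem s hc, dist_comm, dist_eq_norm_vsub V, h, norm_smul,
    Real.norm_of_nonneg ht, dist_eq_norm_vsub V]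

end EuclideanGeometry

theorem stmt_14_general (a b c : EuclideanSpace ℝ (Fin 2))
    (hind : AffineIndependent ℝ ![a, b, c])
    (x y : ℝ) (hx : x = dist b c) (hy : y = dist a c) (hxy : x ≤ y)
    (U : AffineSubspace ℝ (EuclideanSpace ℝ (Fin 2))) [Nonempty U]
    (hcU : c ∈ U)
    (hbisect : ∃ t : ℝ, 0 < t ∧
      EuclideanGeometry.reflection U a -ᵥ c = t • (b -ᵥ c)) :
    circumradius (convexHull ℝ {a, b, c})
        ((EuclideanGeometry.reflection U) '' (convexHull ℝ {a, b, c})) =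
      y / x := by
  obtain ⟨t, ht, hta⟩ := hbisect
  have hx0 : 0 < x := hx ▸ dist_pos.2 (hind.injective.ne (show (1 : Fin 3) ≠ 2 by decide))
  obtain rfl : t = y / x := by
    rw [eq_div_iff hx0.ne', hx, hy, dist_eq_mul_dist_of_reflection_vsub_eq_smul U hcU ht.le hta]
  have htb := reflection_vsub_eq_inv_smul_of_reflection_vsub_eq_smul U hcU ht.ne' hta
  have himage : reflection U '' convexHull ℝ {a, b, c} =
      convexHull ℝ {reflection U a, reflection U b, c} := by
    simpa [Set.image_insert_eq, (reflection_eq_self_iff c).2 hcU] using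
      (reflection U).toAffineEquiv.toAffineMap.image_convexHull {a, b, c}
  rw [vsub_eq_sub, vsub_eq_sub] at hta htb
  rw [himage]
  exact circumradius_eq_of_subset_singleton_add_smul ht
    (triangle_subset_singleton_add_smul ((one_le_div hx0).2 hxy) hta htb)
    fun s hs z hz => le_of_triangle_subset_singleton_add_smul ht hs.le
      hind.vsub_notMem_span_vsub hta htb hz

theorem stmt_14 (a b c : EuclideanSpace ℝ (Fin 2))
    (hind : AffineIndependent ℝ ![a, b, c])
    (x y : ℝ) (hx : x = dist b c) (hy : y = dist a c) (hxy : x ≤ y)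
    (U : AffineSubspace ℝ (EuclideanSpace ℝ (Fin 2))) [Nonempty U]
    (hcU : c ∈ U) (hdim : Module.finrank ℝ U.direction = 1)
    (hbisect : ∃ t : ℝ, 0 < t ∧
      EuclideanGeometry.reflection U a -ᵥ c = t • (b -ᵥ c)) :
    circumradius (convexHull ℝ {a, b, c})
        ((EuclideanGeometry.reflection U) '' (convexHull ℝ {a, b, c})) =
      y / x :=
  stmt_14_general a b c hind x y hx hy hxy U hcU hbisect
end
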